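/- For every three integers r, t, n with 2 ≤ r ≤ t ≤ 2r ≤ n−2, there exists a connected graph G of order n with metric dimension dim(G) = r and edge metric dimension edim(G) = t. -/

import Mathlib

open SimpleGraph

/-- Distance from a vertex `v` to an edge `e = uw`: `min (d v u) (d v w)`. -/
noncomputable def edgeDist {V : Type*} (G : SimpleGraph V) (v : V) (e : Sym2 V) : ℕ :=
  Sym2.lift ⟨fun u w => min (G.dist v u) (G.dist v w), fun u w => by simp [min_comm]⟩ e

/-- `S` is an edge metric generator: every two distinct edges are distinguished
by some vertex of `S`. -/
def IsEdgeMetricGenerator {V : Type*} (G : SimpleGraph V) (S : Set V) : Prop :=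
  ∀ e₁ ∈ G.edgeSet, ∀ e₂ ∈ G.edgeSet, e₁ ≠ e₂ →
    ∃ v ∈ S, edgeDist G v e₁ ≠ edgeDist G v e₂

/-- The edge metric dimension: minimum cardinality of an edge metric generator. -/
noncomputable def edim {V : Type*} (G : SimpleGraph V) : ℕ :=
  sInf {k | ∃ S : Finset V, S.card = k ∧ IsEdgeMetricGenerator G ↑S}

/-- `S` is a (vertex) metric generator: every two distinct vertices are
distinguished by some vertex of `S`. -/
def IsMetricGenerator {V : Type*} (G : SimpleGraph V) (S : Set V) : Prop :=
  ∀ u v : V, u ≠ v → ∃ w ∈ S, G.dist w u ≠ G.dist w v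

/-- The metric dimension: minimum cardinality of a metric generator. -/
noncomputable def mdim {V : Type*} (G : SimpleGraph V) : ℕ :=
  sInf {k | ∃ S : Finset V, S.card = k ∧ IsMetricGenerator G ↑S}

/-!
Glue `s` triangles and `p` leaves at one end `h` of a path with `m` further vertices. The two
vertices of a triangle other than `h` are twins, and so are any two leaves; hence a metric
generator meets every triangle and misses at most one leaf, and if it misses a leaf it must contain
a path vertex to tell that leaf from the path neighbour of `h`. So `dim = s + p`, attained by one
vertex per triangle together with all leaves. Likewise the `2s + p` edges at `h` leading off the
path are separated only by their outer endpoints, and a missing endpoint again forces a path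
vertex, so `edim = 2s + p`, attained by all vertices off the path. Take `s = t - r`, `p = 2r - t`
and `m = n - 1 - t`.
-/

open Finset

namespace SimpleGraph

variable {V : Type*} {G : SimpleGraph V}

theorem le_length_of_le_succ_of_adj {d : V → V → ℕ} (hd : ∀ v, d v v = 0)
    (hadj : ∀ u w v, G.Adj u w → d u v ≤ d w v + 1) {u v : V} (q : G.Walk u v) :
    d u v ≤ q.length := by
  induction q with
  | nil => simp [hd]
  | @cons a b c h q ih =>
    have := hadj a b c h
    rw [Walk.length_cons]
    omega

theorem reachable_and_dist_le_of_exists_adj {d : V → V → ℕ}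
    (hstep : ∀ u v, u ≠ v → ∃ w, G.Adj u w ∧ d w v + 1 = d u v) (u v : V) :
    G.Reachable u v ∧ G.dist u v ≤ d u v := by
  induction hk : d u v using Nat.strong_induction_on generalizing u with
  | _ k ih =>
    obtain rfl | huv := eq_or_ne u v
    · simp
    obtain ⟨w, hadj, hw⟩ := hstep u v huv
    obtain ⟨hr, hle⟩ := ih _ (by omega) w rfl
    obtain ⟨q, hq⟩ := hr.exists_walk_length_eq_dist
    refine ⟨hadj.reachable.trans hr, ?_⟩
    have := dist_le (Walk.cons hadj q)
    rw [Walk.length_cons] at this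
    omega

theorem connected_and_dist_eq_of_exists_adj [Nonempty V] {d : V → V → ℕ} (hd : ∀ v, d v v = 0)
    (hadj : ∀ u w v, G.Adj u w → d u v ≤ d w v + 1)
    (hstep : ∀ u v, u ≠ v → ∃ w, G.Adj u w ∧ d w v + 1 = d u v) :
    G.Connected ∧ ∀ u v, G.dist u v = d u v := by
  refine ⟨(connected_iff _).2 ⟨fun u v => (reachable_and_dist_le_of_exists_adj hstep u v).1,
    ‹_›⟩, fun u v => ?_⟩
  obtain ⟨hr, hle⟩ := reachable_and_dist_le_of_exists_adj hstep u v
  obtain ⟨q, hq⟩ := hr.exists_walk_length_eq_dist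
  have := le_length_of_le_succ_of_adj hd hadj q
  omega

end SimpleGraph

section MetricDimension

variable {V : Type*} {G : SimpleGraph V}

lemma mdim_eq_card {S : Finset V} (hS : IsMetricGenerator G S)
    (hmin : ∀ T : Finset V, IsMetricGenerator G T → #S ≤ #T) : mdim G = #S :=
  le_antisymm (Nat.sInf_le ⟨S, rfl, hS⟩)
    (le_csInf ⟨_, S, rfl, hS⟩ (by rintro _ ⟨T, rfl, hT⟩; exact hmin T hT))

lemma edim_eq_card {S : Finset V} (hS : IsEdgeMetricGenerator G S)
    (hmin : ∀ T : Finset V, IsEdgeMetricGenerator G T → #S ≤ #T) : edim G = #S :=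
  le_antisymm (Nat.sInf_le ⟨S, rfl, hS⟩)
    (le_csInf ⟨_, S, rfl, hS⟩ (by rintro _ ⟨T, rfl, hT⟩; exact hmin T hT))

lemma edgeDist_mk (v u w : V) : edgeDist G v s(u, w) = min (G.dist v u) (G.dist v w) := rfl

lemma edgeDist_eq_zero_iff (hG : G.Connected) {v : V} {e : Sym2 V} :
    edgeDist G v e = 0 ↔ v ∈ e := by
  induction e using Sym2.ind with
  | _ u w => rw [edgeDist_mk, Nat.min_eq_zero_iff, hG.dist_eq_zero_iff, hG.dist_eq_zero_iff,
      Sym2.mem_iff]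

end MetricDimension

theorem Fintype.card_le_card_of_forall_exists_mk_mem {α β : Type*} [Fintype α] [DecidableEq α]
    {Q : Finset (α × β)} (h : ∀ a, ∃ b, (a, b) ∈ Q) : Fintype.card α ≤ #Q := by
  have himage : Q.image Prod.fst = univ :=
    eq_univ_of_forall fun a => mem_image.2 <| (h a).elim fun b hb => ⟨(a, b), hb, rfl⟩
  calc Fintype.card α = #(Q.image Prod.fst) := by rw [himage, card_univ]
    _ ≤ #Q := card_image_le

theorem Fintype.card_le_card_add_card_of_mem_or_mem {α β : Type*} [Fintype α] [DecidableEq α]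
    {A : Finset α} {B : Finset β} (hA : ∀ a b, a ≠ b → a ∈ A ∨ b ∈ A)
    (hB : ∀ a ∉ A, B.Nonempty) : Fintype.card α ≤ #A + #B := by
  by_cases hall : ∀ a, a ∈ A
  · rw [eq_univ_of_forall hall, card_univ]
    omega
  obtain ⟨a, ha⟩ := not_forall.1 hall
  have hsub : univ.erase a ⊆ A := fun b hb => (hA b a (ne_of_mem_erase hb)).resolve_right ha
  have := card_le_card hsub
  rw [card_erase_of_mem (mem_univ a), card_univ] at this
  have := (hB a ha).card_pos
  omega

namespace Realization

/-- `.inl a` is the vertex at distance `a` from the hub `.inl 0` along the path, `sp i false` and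
`sp i true` span the `i`-th triangle at the hub, and the `lf j` are the leaves at the hub. The graph
is defined by `d u v = 1`, and `d` turns out to be its distance. -/
abbrev Vertex (s p m : ℕ) : Type := Fin (m + 1) ⊕ (Fin s × Bool ⊕ Fin p)

variable {s p m : ℕ}

abbrev sp (i : Fin s) (c : Bool) : Vertex s p m := .inr (.inl (i, c))
abbrev lf (j : Fin p) : Vertex s p m := .inr (.inr j)

def d : Vertex s p m → Vertex s p m → ℕ
  | .inl a, .inl b => Nat.dist a b
  | .inl a, .inr _ => a + 1
  | .inr _, .inl b => b + 1
  | .inr (.inl (i, c)), .inr (.inl (i', c')) => if i = i' then (if c = c' then 0 else 1) else 2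
  | .inr x, .inr y => if x = y then 0 else 2

@[simp] lemma d_inl_inl (a b : Fin (m + 1)) :
    d (.inl a : Vertex s p m) (.inl b) = Nat.dist a b := rfl

@[simp] lemma d_inl_inr (a : Fin (m + 1)) (y : Fin s × Bool ⊕ Fin p) :
    d (.inl a : Vertex s p m) (.inr y) = a + 1 := rfl

@[simp] lemma d_inr_inl (x : Fin s × Bool ⊕ Fin p) (b : Fin (m + 1)) :
    d (.inr x : Vertex s p m) (.inl b) = b + 1 := rfl

@[simp] lemma d_sp_sp (i i' : Fin s) (c c' : Bool) :
    d (sp i c : Vertex s p m) (sp i' c') = if i = i' then (if c = c' then 0 else 1) else 2 := rfl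

@[simp] lemma d_sp_lf (i : Fin s) (c : Bool) (j : Fin p) : d (sp i c : Vertex s p m) (lf j) = 2 :=
  rfl

@[simp] lemma d_lf_sp (j : Fin p) (i : Fin s) (c : Bool) : d (lf j : Vertex s p m) (sp i c) = 2 :=
  rfl

@[simp] lemma d_lf_lf (j j' : Fin p) :
    d (lf j : Vertex s p m) (lf j') = if j = j' then 0 else 2 := by
  simp [d]

lemma d_self (v : Vertex s p m) : d v v = 0 := by
  rcases v with a | ⟨i, c⟩ | j <;> simp

lemma d_comm (u v : Vertex s p m) : d u v = d v u := by
  rcases u with a | ⟨i, c⟩ | j <;> rcases v with b | ⟨i', c'⟩ | j' <;>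
    simp only [d, Nat.dist_comm, eq_comm]

lemma d_inr_inr_le_two (x y : Fin s × Bool ⊕ Fin p) : d (.inr x : Vertex s p m) (.inr y) ≤ 2 := by
  rcases x with ⟨i, c⟩ | j <;> rcases y with ⟨i', c'⟩ | j' <;> simp only [d] <;> split_ifs <;> omega

lemma d_eq_zero_iff {u v : Vertex s p m} : d u v = 0 ↔ u = v := by
  refine ⟨fun h => ?_, fun h => h ▸ d_self u⟩
  rcases u with a | ⟨i, c⟩ | j <;> rcases v with b | ⟨i', c'⟩ | j' <;>
    simp only [d, Nat.dist] at h ⊢ <;> (try split_ifs at h) <;> grind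

lemma d_le_d_add_one {u w : Vertex s p m} (h : d u w = 1) (v : Vertex s p m) :
    d u v ≤ d w v + 1 := by
  rcases u with a | ⟨i, c⟩ | j <;> rcases w with b | ⟨i', c'⟩ | j' <;>
    rcases v with e | ⟨i'', c''⟩ | j'' <;>
    simp_all only [d, Nat.dist] <;> (try omega) <;> split_ifs at * <;> simp_all

lemma exists_d_eq_one_d_add_one {u v : Vertex s p m} (h : u ≠ v) :
    ∃ w, d u w = 1 ∧ d w v + 1 = d u v := by
  rcases u with a | x <;> rcases v with b | y
  · have hab : a.val ≠ b.val := fun e => h (by rw [Fin.ext e])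
    rcases Nat.lt_or_gt_of_ne hab with hlt | hgt
    · exact ⟨.inl ⟨a + 1, by omega⟩, by simp [Nat.dist], by simp [Nat.dist]; omega⟩
    · exact ⟨.inl ⟨a - 1, by omega⟩, by simp [Nat.dist]; omega, by simp [Nat.dist]; omega⟩
  · by_cases ha : a.val = 0
    · exact ⟨.inr y, by simp [ha], by simp [d_self, ha]⟩
    · exact ⟨.inl ⟨a - 1, by omega⟩, by simp [Nat.dist]; omega, by simp; omega⟩
  · exact ⟨.inl 0, by simp, by simp [Nat.dist]⟩
  · have hpos : d (.inr x : Vertex s p m) (.inr y) ≠ 0 := d_eq_zero_iff.not.2 h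
    have := d_inr_inr_le_two (m := m) x y
    by_cases h1 : d (.inr x : Vertex s p m) (.inr y) = 1
    · exact ⟨.inr y, h1, by rw [d_self, h1]⟩
    · exact ⟨.inl 0, by simp, by simp; omega⟩

def graph (s p m : ℕ) : SimpleGraph (Vertex s p m) where
  Adj u v := d u v = 1
  symm := ⟨fun u v h => by rwa [d_comm]⟩
  loopless := ⟨fun v h => by simp [d_self] at h⟩

lemma connected_and_dist_eq : (graph s p m).Connected ∧ ∀ u v, (graph s p m).dist u v = d u v :=
  connected_and_dist_eq_of_exists_adj d_self (fun _ _ v h => d_le_d_add_one h v)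
    (fun _ _ h => exists_d_eq_one_d_add_one h)

lemma connected : (graph s p m).Connected := connected_and_dist_eq.1

lemma dist_eq (u v : Vertex s p m) : (graph s p m).dist u v = d u v := connected_and_dist_eq.2 u v

lemma card_vertex : Fintype.card (Vertex s p m) = m + 1 + (2 * s + p) := by
  simp [mul_comm]

def metricBasis (s p m : ℕ) : Finset (Vertex s p m) :=
  (∅ : Finset (Fin (m + 1))).disjSum ((univ ×ˢ {false}).disjSum univ)

lemma card_metricBasis : #(metricBasis s p m) = s + p := by
  simp [metricBasis]

lemma d_sp_true_of_mem_metricBasis {z : Vertex s p m} (hz : z ∈ metricBasis s p m) {i : Fin s}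
    (hzi : z ≠ sp i false) : d z (sp i true) = 2 := by
  rcases z with _ | ⟨i', c'⟩ | j <;> simp_all [metricBasis]

lemma exists_mem_metricBasis_d_inl_ne_d_sp (hsp : 2 ≤ s + p) (a : Fin (m + 1)) (i : Fin s) :
    ∃ w ∈ metricBasis s p m, d w (.inl a) ≠ d w (sp i true) := by
  by_cases ha : a.val = 0
  · obtain ⟨z, hz, hzi⟩ :=
      exists_mem_ne (s := metricBasis s p m) (by rw [card_metricBasis]; omega) (sp i false)
    refine ⟨z, hz, ?_⟩
    rcases z with _ | x
    · simp [metricBasis] at hz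
    · rw [d_sp_true_of_mem_metricBasis hz hzi, d_inr_inl]
      omega
  · refine ⟨sp i false, by simp [metricBasis], ?_⟩
    rw [d_inr_inl, d_sp_sp, if_pos rfl, if_neg Bool.false_ne_true]
    omega

lemma isMetricGenerator_metricBasis (hsp : 2 ≤ s + p) :
    IsMetricGenerator (graph s p m) (metricBasis s p m) := by
  intro u v huv
  simp only [dist_eq, mem_coe]
  by_cases hu : u ∈ metricBasis s p m
  · exact ⟨u, hu, by rw [d_self, Ne, eq_comm, d_eq_zero_iff]; exact huv⟩
  by_cases hv : v ∈ metricBasis s p m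
  · exact ⟨v, hv, by rw [d_self, Ne, d_eq_zero_iff]; exact huv.symm⟩
  rcases u with a | ⟨i, c⟩ | j <;> rcases v with b | ⟨i', c'⟩ | j' <;>
    simp [metricBasis] at hu hv <;> subst_vars
  · obtain ⟨z, hz⟩ : (metricBasis s p m).Nonempty := by rw [← card_pos, card_metricBasis]; omega
    rcases z with _ | x
    · simp [metricBasis] at hz
    · refine ⟨.inr x, hz, ?_⟩
      simp only [d_inr_inl, ne_eq, add_left_inj]
      exact Fin.val_ne_of_ne (Sum.inl_injective.ne_iff.1 huv)
  · exact exists_mem_metricBasis_d_inl_ne_d_sp hsp a i'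
  · exact (exists_mem_metricBasis_d_inl_ne_d_sp hsp b i).imp fun _ ⟨h, hne⟩ => ⟨h, hne.symm⟩
  · refine ⟨sp i false, by simp [metricBasis], ?_⟩
    simp_all

lemma exists_eq_sp_of_d_ne {w : Vertex s p m} {i : Fin s}
    (h : d w (sp i false) ≠ d w (sp i true)) : ∃ c, w = sp i c := by
  rcases w with a | ⟨i', c'⟩ | j
  · simp at h
  · by_cases hi : i' = i
    · exact ⟨c', by rw [hi]⟩
    · simp [hi] at h
  · simp at h

lemma eq_lf_or_eq_lf_of_d_ne {w : Vertex s p m} {j j' : Fin p} (h : d w (lf j) ≠ d w (lf j')) :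
    w = lf j ∨ w = lf j' := by
  rcases w with a | ⟨i, c⟩ | j''
  · simp at h
  · simp at h
  · by_contra hne
    simp_all [eq_comm]

lemma eq_lf_or_exists_eq_inl_of_d_ne {w : Vertex s p m} {j : Fin p} {a : Fin (m + 1)}
    (ha : a.val = 1) (h : d w (lf j) ≠ d w (.inl a)) : w = lf j ∨ ∃ b, w = .inl b := by
  rcases w with b | ⟨i, c⟩ | j'
  · exact .inr ⟨b, rfl⟩
  · simp [ha] at h
  · by_contra hne
    simp_all [eq_comm]

lemma add_le_card_of_isMetricGenerator (hm : 1 ≤ m) {S : Finset (Vertex s p m)}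
    (hS : IsMetricGenerator (graph s p m) S) : s + p ≤ #S := by
  simp only [IsMetricGenerator, dist_eq, mem_coe] at hS
  have hspokes : s ≤ #S.toRight.toLeft := by
    refine (Fintype.card_fin s).symm.trans_le <|
      Fintype.card_le_card_of_forall_exists_mk_mem fun i => ?_
    obtain ⟨w, hw, hne⟩ := hS (sp i false) (sp i true) (by simp)
    obtain ⟨c, rfl⟩ := exists_eq_sp_of_d_ne hne
    exact ⟨c, by simpa using hw⟩
  have hleaves : p ≤ #S.toRight.toRight + #S.toLeft := by
    refine (Fintype.card_fin p).symm.trans_le <|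
      Fintype.card_le_card_add_card_of_mem_or_mem (fun j j' hjj' => ?_) (fun j hj => ?_)
    · obtain ⟨w, hw, hne⟩ := hS (lf j) (lf j') (by simpa)
      rcases eq_lf_or_eq_lf_of_d_ne hne with rfl | rfl
      · exact .inl (by simpa using hw)
      · exact .inr (by simpa using hw)
    · obtain ⟨w, hw, hne⟩ := hS (lf j) (.inl ⟨1, by omega⟩) (by simp)
      rcases eq_lf_or_exists_eq_inl_of_d_ne rfl hne with rfl | ⟨b, rfl⟩
      · exact absurd (by simpa using hw) hj
      · exact ⟨b, by simpa using hw⟩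
  have := card_toLeft_add_card_toRight (u := S)
  have := card_toLeft_add_card_toRight (u := S.toRight)
  omega

lemma mdim_graph (hm : 1 ≤ m) (hsp : 2 ≤ s + p) : mdim (graph s p m) = s + p := by
  rw [← card_metricBasis (m := m), mdim_eq_card (isMetricGenerator_metricBasis hsp)]
  intro T hT
  rw [card_metricBasis]
  exact add_le_card_of_isMetricGenerator hm hT

def edgeMetricBasis (s p m : ℕ) : Finset (Vertex s p m) := (∅ : Finset (Fin (m + 1))).disjSum univ

lemma card_edgeMetricBasis : #(edgeMetricBasis s p m) = 2 * s + p := by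
  simp [edgeMetricBasis, mul_comm]

lemma exists_eq_inl_of_d_inr_inr_eq_one {x y : Fin s × Bool ⊕ Fin p}
    (h : d (.inr x : Vertex s p m) (.inr y) = 1) : ∃ i c, x = .inl (i, c) ∧ y = .inl (i, !c) := by
  rcases x with ⟨i, c⟩ | j <;> rcases y with ⟨i', c'⟩ | j' <;> simp only [d] at h <;>
    split_ifs at h with hi <;> try omega
  subst hi
  exact ⟨i, c, rfl, by cases c <;> cases c' <;> simp_all⟩

lemma exists_eq_of_mem_edgeSet {e : Sym2 (Vertex s p m)} (he : e ∈ (graph s p m).edgeSet) :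
    (∃ a b : Fin (m + 1), a.val + 1 = b.val ∧ e = s(.inl a, .inl b)) ∨
      (∃ x, e = s(.inl 0, .inr x)) ∨ ∃ i, e = s(sp i false, sp i true) := by
  induction e using Sym2.ind with
  | _ u v =>
  change d u v = 1 at he
  rcases u with a | x <;> rcases v with b | y
  · rw [d_inl_inl, Nat.dist] at he
    rcases Nat.lt_or_ge a b with hab | hab
    · exact .inl ⟨a, b, by omega, rfl⟩
    · exact .inl ⟨b, a, by omega, Sym2.eq_swap⟩
  · obtain rfl : a = 0 := Fin.ext (by simp at he; omega)
    exact .inr (.inl ⟨y, rfl⟩)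
  · obtain rfl : b = 0 := Fin.ext (by simp at he; omega)
    exact .inr (.inl ⟨x, Sym2.eq_swap⟩)
  · obtain ⟨i, c, rfl, rfl⟩ := exists_eq_inl_of_d_inr_inr_eq_one he
    refine .inr (.inr ⟨i, ?_⟩)
    cases c
    · rfl
    · exact Sym2.eq_swap

lemma edgeDist_inr_inl_inl (x : Fin s × Bool ⊕ Fin p) {a b : Fin (m + 1)}
    (hab : a.val + 1 = b.val) :
    edgeDist (graph s p m) (.inr x) s(.inl a, .inl b) = a + 1 := by
  rw [edgeDist_mk, dist_eq, dist_eq, d_inr_inl, d_inr_inl]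
  omega

lemma isEdgeMetricGenerator_edgeMetricBasis (hsp : 1 ≤ s + p) :
    IsEdgeMetricGenerator (graph s p m) (edgeMetricBasis s p m) := by
  intro e₁ he₁ e₂ he₂ hne
  -- A vertex off the path has edge distance `0` exactly to the edges containing it.
  by_cases hx : ∃ x, ¬(.inr x ∈ e₁ ↔ .inr x ∈ e₂)
  · obtain ⟨x, hx⟩ := hx
    refine ⟨.inr x, by simp [edgeMetricBasis], fun h => hx ?_⟩
    rw [← edgeDist_eq_zero_iff connected, ← edgeDist_eq_zero_iff connected, h]
  simp only [not_exists, not_not] at hx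
  rcases exists_eq_of_mem_edgeSet he₁ with ⟨a, b, hab, rfl⟩ | ⟨x, rfl⟩ | ⟨i, rfl⟩ <;>
    rcases exists_eq_of_mem_edgeSet he₂ with ⟨a', b', hab', rfl⟩ | ⟨x', rfl⟩ | ⟨i', rfl⟩
  · obtain ⟨x⟩ : Nonempty (Fin s × Bool ⊕ Fin p) := Fintype.card_pos_iff.1 (by simp; omega)
    refine ⟨.inr x, by simp [edgeMetricBasis], ?_⟩
    rw [edgeDist_inr_inl_inl x hab, edgeDist_inr_inl_inl x hab']
    rintro h
    obtain rfl : a = a' := Fin.ext (by omega)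
    obtain rfl : b = b' := Fin.ext (by omega)
    exact hne rfl
  all_goals simp_all
  · obtain ⟨h₁, h₂⟩ := hx.1 i'
    simp [← h₁.2 rfl] at h₂
  · obtain ⟨h₁, h₂⟩ := hx.1 i
    simp [← h₁.1 rfl] at h₂

lemma edgeDist_inl_hubEdge (a : Fin (m + 1)) (x : Fin s × Bool ⊕ Fin p) :
    edgeDist (graph s p m) (.inl a) s(.inl 0, .inr x) = a := by
  simp [edgeDist_mk, dist_eq, Nat.dist]

lemma edgeDist_inr_hubEdge {z x : Fin s × Bool ⊕ Fin p} (hzx : z ≠ x) :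
    edgeDist (graph s p m) (.inr z) s(.inl 0, .inr x) = 1 := by
  have : d (.inr z : Vertex s p m) (.inr x) ≠ 0 := d_eq_zero_iff.not.2 (by simpa)
  rw [edgeDist_mk, dist_eq, dist_eq, d_inr_inl, Fin.val_zero]
  omega

lemma eq_or_eq_of_edgeDist_hubEdge_ne {w : Vertex s p m} {x y : Fin s × Bool ⊕ Fin p}
    (h : edgeDist (graph s p m) w s(.inl 0, .inr x) ≠ edgeDist (graph s p m) w s(.inl 0, .inr y)) :
    w = .inr x ∨ w = .inr y := by
  rcases w with a | z
  · simp [edgeDist_inl_hubEdge] at h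
  · by_contra hne
    simp only [not_or, Sum.inr.injEq] at hne
    rw [edgeDist_inr_hubEdge hne.1, edgeDist_inr_hubEdge hne.2] at h
    exact h rfl

lemma eq_or_exists_eq_inl_of_edgeDist_ne {w : Vertex s p m} {x : Fin s × Bool ⊕ Fin p}
    {a : Fin (m + 1)} (ha : a.val = 1)
    (h : edgeDist (graph s p m) w s(.inl 0, .inr x) ≠ edgeDist (graph s p m) w s(.inl 0, .inl a)) :
    w = .inr x ∨ ∃ b, w = .inl b := by
  rcases w with b | z
  · exact .inr ⟨b, rfl⟩
  · by_contra hne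
    simp only [Sum.inr.injEq, reduceCtorEq, exists_false, or_false] at hne
    rw [edgeDist_inr_hubEdge hne, edgeDist_inr_inl_inl z (by simp [ha])] at h
    exact h rfl

lemma two_mul_add_le_card_of_isEdgeMetricGenerator (hm : 1 ≤ m) {S : Finset (Vertex s p m)}
    (hS : IsEdgeMetricGenerator (graph s p m) S) : 2 * s + p ≤ #S := by
  have hub (x : Fin s × Bool ⊕ Fin p) : s(.inl 0, .inr x) ∈ (graph s p m).edgeSet := by simp [graph]
  have hcard := Fintype.card_le_card_add_card_of_mem_or_mem (A := S.toRight) (B := S.toLeft)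
    (fun x y hxy => ?_) (fun x hx => ?_)
  · have := card_toLeft_add_card_toRight (u := S)
    simp only [Fintype.card_sum, Fintype.card_prod, Fintype.card_fin, Fintype.card_bool] at hcard
    omega
  · obtain ⟨w, hw, hne⟩ := hS _ (hub x) _ (hub y) (by simpa)
    rcases eq_or_eq_of_edgeDist_hubEdge_ne hne with rfl | rfl
    · exact .inl (by simpa using hw)
    · exact .inr (by simpa using hw)
  · obtain ⟨w, hw, hne⟩ :=
      hS _ (hub x) s(.inl 0, .inl ⟨1, by omega⟩) (by simp [graph, Nat.dist]) (by simp)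
    rcases eq_or_exists_eq_inl_of_edgeDist_ne rfl hne with rfl | ⟨b, rfl⟩
    · exact absurd (by simpa using hw) hx
    · exact ⟨b, by simpa using hw⟩

lemma edim_graph (hm : 1 ≤ m) (hsp : 1 ≤ s + p) :
    edim (graph s p m) = 2 * s + p := by
  rw [← card_edgeMetricBasis (m := m), edim_eq_card (isEdgeMetricGenerator_edgeMetricBasis hsp)]
  intro T hT
  rw [card_edgeMetricBasis]
  exact two_mul_add_le_card_of_isEdgeMetricGenerator hm hT

end Realization

theorem realization_dim_edim (r t n : ℕ) (hr : 2 ≤ r) (hrt : r ≤ t) (ht : t ≤ 2 * r)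
    (hn : 2 * r ≤ n - 2) :
    ∃ (V : Type) (_ : Fintype V) (G : SimpleGraph V), G.Connected ∧
      Fintype.card V = n ∧ mdim G = r ∧ edim G = t := by
  refine ⟨Realization.Vertex (t - r) (2 * r - t) (n - 1 - t), inferInstance,
    Realization.graph (t - r) (2 * r - t) (n - 1 - t), Realization.connected, ?_, ?_, ?_⟩
  · rw [Realization.card_vertex]
    omega
  · rw [Realization.mdim_graph (by omega) (by omega)]
    omega
  · rw [Realization.edim_graph (by omega) (by omega)]
    omega
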